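/- Let λ ∈ 𝔥* and let V be a highest weight 𝔤-module with highest weight λ. Let H_1, …, H_s be pairwise distinct independent subsets of J_λ (the empty set allowed) such that the weight w_{H_t} • λ := λ − Σ_{i∈H_t}(λ(α_i^∨)+1)α_i lies in wt V for every 1 ≤ t ≤ s. Then for every μ ∈ 𝔥*: dim V_μ ≥ Σ_{t=1}^{s} dim L(w_{H_t} • λ)_μ. -/

import Mathlib

/-! For each `t`, `u_t = ∏_{i ∈ H_t} f_i ^ (λ(α_i^∨) + 1) · v` is a singular vector of weight
`w_{H_t} • λ` (the `f_i`, `i ∈ H_t`, commute because `H_t` is independent). It spans the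
`w_{H_t} • λ`-weight space of `V`, which is nonzero by hypothesis, so `u_t ≠ 0`.
If `u_{t₀}` has minimal height among the `u_t`, `t ∈ S`, its weight is not a weight of the
submodule `N` generated by the others, so its image in `V ⧸ N` is still a nonzero singular vector;
by induction on `S`, `dim V_μ` is at least the sum of the `μ`-multiplicities of the submodules
generated by these images. Finally, a nonzero singular vector `q` of weight `ν` in a module `Q`
satisfies `dim L(ν)_μ ≤ dim (U(𝔤) q)_μ`: by simplicity of `L(ν)`, the submodule of `Q × L(ν)`
generated by `(q, l)` is the graph of a surjection `U(𝔤) q → L(ν)`, which replaces the universal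
property of Verma modules. -/

open scoped BigOperators

attribute [local instance] Classical.propDecidable

namespace KM

/-- The set of `ℤ≥0`-linear combinations of elements of `S`. -/
def cone {W : Type} [AddCommMonoid W] (S : Set W) : Set W :=
  (AddSubmonoid.closure S : AddSubmonoid W)

/-- Minkowski difference of two sets. -/
def mdiff {W : Type} [Sub W] (A B : Set W) : Set W :=
  {x | ∃ a ∈ A, ∃ b ∈ B, x = a - b}

variable {g : Type} [LieRing g] [LieAlgebra ℂ g]

/-- The `μ`-weight space of a `g`-module `V` with respect to a Cartan subalgebra `H`. -/
def wtSpace (H : LieSubalgebra ℂ g) (V : Type) [AddCommGroup V] [Module ℂ V]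
    [LieRingModule g V] [LieModule ℂ g V] (μ : Module.Dual ℂ H) : Submodule ℂ V where
  carrier := {w | ∀ h : H, ⁅(h : g), w⁆ = μ h • w}
  add_mem' := by
    intro a b ha hb h
    rw [lie_add, ha h, hb h, smul_add]
  zero_mem' := by
    intro h
    rw [lie_zero, smul_zero]
  smul_mem' := by
    intro t w hw h
    rw [lie_smul, hw h, smul_smul, smul_smul, mul_comm]

/-- The set of weights of a `g`-module `V`. -/
def wtSet (H : LieSubalgebra ℂ g) (V : Type) [AddCommGroup V] [Module ℂ V]
    [LieRingModule g V] [LieModule ℂ g V] : Set (Module.Dual ℂ H) :=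
  {μ | wtSpace H V μ ≠ ⊥}

/-- Iterated action `x^n · w` of an element `x : g` on a module vector. -/
def actPow {V : Type} [AddCommGroup V] [LieRingModule g V] (x : g) (n : ℕ) (w : V) : V :=
  (fun u => ⁅x, u⁆)^[n] w

/-- The data of a Kac--Moody Lie algebra `g` attached to a generalized Cartan matrix `A`,
with Cartan subalgebra `H`, simple roots `α`, simple coroots `coroot`, and Chevalley
generators `e`, `f`. -/
structure Data (𝓘 : Type) (g : Type) [LieRing g] [LieAlgebra ℂ g] where
  H : LieSubalgebra ℂ g
  α : 𝓘 → Module.Dual ℂ H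
  coroot : 𝓘 → H
  e : 𝓘 → g
  f : 𝓘 → g
  A : 𝓘 → 𝓘 → ℤ
  pairing_eq : ∀ i j, α i (coroot j) = (A j i : ℂ)
  A_diag : ∀ i, A i i = 2
  A_offdiag : ∀ i j, i ≠ j → A i j ≤ 0
  A_zero_iff : ∀ i j, A i j = 0 ↔ A j i = 0
  indepSimple : LinearIndependent ℂ α
  cartan_abelian : ∀ h h' : H, ⁅(h : g), (h' : g)⁆ = 0
  lie_h_e : ∀ (h : H) (i : 𝓘), ⁅(h : g), e i⁆ = α i h • e i
  lie_h_f : ∀ (h : H) (i : 𝓘), ⁅(h : g), f i⁆ = -(α i h) • f i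
  lie_e_f_same : ∀ i, ⁅e i, f i⁆ = (coroot i : g)
  lie_e_f_ne : ∀ i j, i ≠ j → ⁅e i, f j⁆ = 0
  serre_e : ∀ i j, i ≠ j → ((LieAlgebra.ad ℂ g (e i)) ^ (1 - A i j).toNat) (e j) = 0
  serre_f : ∀ i j, i ≠ j → ((LieAlgebra.ad ℂ g (f i)) ^ (1 - A i j).toNat) (f j) = 0
  generates : LieSubalgebra.lieSpan ℂ g ((H : Set g) ∪ Set.range e ∪ Set.range f) = ⊤
  rootDecomp : (⨆ μ : Module.Dual ℂ H, wtSpace H g μ) = ⊤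
  zeroWtSpace : wtSpace H g (0 : Module.Dual ℂ H) = H.toSubmodule
  root_pm : ∀ μ : Module.Dual ℂ H, μ ≠ 0 → wtSpace H g μ ≠ ⊥ →
      μ ∈ cone (Set.range α) ∨ -μ ∈ cone (Set.range α)

variable {𝓘 : Type}

/-- `V` is a highest weight `g`-module with highest weight `lam` and highest weight
vector `v`; equivalently, `V` is a nonzero quotient of the Verma module `M(lam)`. -/
def IsHW (D : Data 𝓘 g) (V : Type) [AddCommGroup V] [Module ℂ V] [LieRingModule g V]
    [LieModule ℂ g V] (lam : Module.Dual ℂ D.H) (v : V) : Prop :=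
  v ≠ 0 ∧ v ∈ wtSpace D.H V lam ∧ (∀ i : 𝓘, ⁅D.e i, v⁆ = 0) ∧
    LieSubmodule.lieSpan ℂ g {v} = ⊤

/-- `J_λ`, the set of integrable directions of `lam`. -/
def Jlam (D : Data 𝓘 g) (lam : Module.Dual ℂ D.H) : Set 𝓘 :=
  {i | ∃ n : ℕ, lam (D.coroot i) = (n : ℂ)}

/-- `Π_J`, the simple roots indexed by `J`. -/
def PiJ (D : Data 𝓘 g) (J : Set 𝓘) : Set (Module.Dual ℂ D.H) := D.α '' J

/-- The root system `Δ` of `g`. -/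
def roots (D : Data 𝓘 g) : Set (Module.Dual ℂ D.H) :=
  {μ | μ ≠ 0 ∧ wtSpace D.H g μ ≠ ⊥}

/-- The positive roots `Δ⁺`. -/
def posRoots (D : Data 𝓘 g) : Set (Module.Dual ℂ D.H) :=
  roots D ∩ cone (Set.range D.α)

/-- The positive roots `Δ⁺_J` of the parabolic subroot system `Δ_J = Δ ∩ ℤΠ_J`. -/
def posRootsJ (D : Data 𝓘 g) (J : Set 𝓘) : Set (Module.Dual ℂ D.H) :=
  posRoots D ∩ (Submodule.span ℤ (D.α '' J) : Set (Module.Dual ℂ D.H))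

/-- `wt_J V := wt V ∩ (λ − ℤ≥0 Π_J)`. -/
def wtJ (D : Data 𝓘 g) (V : Type) [AddCommGroup V] [Module ℂ V] [LieRingModule g V]
    [LieModule ℂ g V] (lam : Module.Dual ℂ D.H) (J : Set 𝓘) : Set (Module.Dual ℂ D.H) :=
  wtSet D.H V ∩ {μ | ∃ x ∈ cone (PiJ D J), μ = lam - x}

/-- A subset `S` of nodes is independent if its induced Dynkin subdiagram has no edges. -/
def IndepSet (D : Data 𝓘 g) (S : Set 𝓘) : Prop :=
  ∀ i ∈ S, ∀ j ∈ S, i ≠ j → D.α i (D.coroot j) = 0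

/-- `J_V`: the union of all minimal independent subsets `I ⊆ J_λ` with
`λ − Σ_{i∈I} (λ(α_i^∨)+1)α_i ∉ wt V`. -/
def JV (D : Data 𝓘 g) (V : Type) [AddCommGroup V] [Module ℂ V] [LieRingModule g V]
    [LieModule ℂ g V] (lam : Module.Dual ℂ D.H) : Set 𝓘 :=
  {i | ∃ I : Finset 𝓘, (↑I : Set 𝓘) ⊆ Jlam D lam ∧ IndepSet D (↑I : Set 𝓘) ∧
    (lam - ∑ k ∈ I, (lam (D.coroot k) + 1) • D.α k) ∉ wtSet D.H V ∧
    (∀ K : Finset 𝓘, K ⊂ I →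
      (lam - ∑ k ∈ K, (lam (D.coroot k) + 1) • D.α k) ∈ wtSet D.H V) ∧
    i ∈ I}

open Module LieSubmodule

lemma finrank_ker_inf_add_finrank_map {K V W : Type*} [DivisionRing K] [AddCommGroup V]
    [Module K V] [AddCommGroup W] [Module K W] (f : V →ₗ[K] W) (P : Submodule K V)
    [FiniteDimensional K P] :
    finrank K ↥(LinearMap.ker f ⊓ P) + finrank K ↥(P.map f) = finrank K P := by
  rw [← LinearMap.finrank_range_add_finrank_ker (f.domRestrict P), LinearMap.range_domRestrict,
    LinearMap.ker_domRestrict, add_comm]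
  congr 1
  rw [← (Submodule.comapSubtypeEquivOfLe (inf_le_right : LinearMap.ker f ⊓ P ≤ P)).finrank_eq,
    Submodule.comap_inf, Submodule.comap_subtype_self, inf_top_eq]

lemma mem_of_mem_iSup_of_iSupIndep {R ι W : Type*} [Ring R] [AddCommGroup W] [Module R W]
    {p q : ι → Submodule R W} (hp : iSupIndep p) (hqp : q ≤ p) {x : W} (hx : x ∈ ⨆ j, q j)
    {i : ι} (hxi : x ∈ p i) : x ∈ q i := by
  rw [iSup_split_single q i] at hx
  obtain ⟨y, hy, z, hz, rfl⟩ := Submodule.mem_sup.1 hx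
  have hzp : z ∈ p i := by simpa using Submodule.sub_mem _ hxi (hqp i hy)
  have hzp' : z ∈ ⨆ (j) (_ : j ≠ i), p j := iSup₂_mono (fun j _ => hqp j) hz
  rw [Submodule.disjoint_def.1 (hp i) z hzp hzp', add_zero]
  exact hy

section WeightSpaces

variable {H : LieSubalgebra ℂ g} {W W' : Type} [AddCommGroup W] [Module ℂ W]
  [LieRingModule g W] [LieModule ℂ g W] [AddCommGroup W'] [Module ℂ W'] [LieRingModule g W']
  [LieModule ℂ g W']

lemma mem_wtSpace_map (φ : W →ₗ⁅ℂ,g⁆ W') {μ : Module.Dual ℂ H} {w : W}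
    (hw : w ∈ wtSpace H W μ) : φ w ∈ wtSpace H W' μ := fun h => by
  rw [← φ.map_lie, hw h, map_smul]

lemma span_le_iSup_span_inter_wtSpace {G : Set W} (hG : ∀ x ∈ G, ∃ ν, x ∈ wtSpace H W ν) :
    Submodule.span ℂ G ≤ ⨆ ν, Submodule.span ℂ (G ∩ wtSpace H W ν) :=
  Submodule.span_le.2 fun x hx => by
    obtain ⟨ν, hν⟩ := hG x hx
    exact Submodule.mem_iSup_of_mem ν (Submodule.subset_span ⟨hx, hν⟩)

variable [IsLieAbelian H]

lemma iSupIndep_wtSpace : iSupIndep (wtSpace H W) := by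
  let T : H → Module.End ℂ W := fun h => LieModule.toEnd ℂ g W h
  have hcomm : ∀ h h' : H, Commute (T h) (T h') := fun h h' => LinearMap.ext fun w => by
    change ⁅(h : g), ⁅(h' : g), w⁆⁆ = ⁅(h' : g), ⁅(h : g), w⁆⁆
    have h0 : ⁅(h : g), (h' : g)⁆ = 0 := by
      rw [← LieSubalgebra.coe_bracket, trivial_lie_zero H H, ZeroMemClass.coe_zero]
    rw [leibniz_lie, h0, zero_lie, zero_add]
  refine ((Module.End.independent_iInf_maxGenEigenspace_of_forall_mapsTo T
    (fun h h' c => Module.End.mapsTo_maxGenEigenspace_of_comm (hcomm h' h) c)).comp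
    (f := fun μ : Module.Dual ℂ H => ⇑μ) DFunLike.coe_injective).mono fun μ => ?_
  exact le_iInf fun h w hw => Module.End.eigenspace_le_maxGenEigenspace
    (Module.End.mem_eigenspace_iff.2 (hw h))

lemma eq_zero_of_mem_wtSpace_of_ne {μ ν : Module.Dual ℂ H} {w : W} (hμ : w ∈ wtSpace H W μ)
    (hν : w ∈ wtSpace H W ν) (hne : μ ≠ ν) : w = 0 :=
  Submodule.disjoint_def.1 (iSupIndep_wtSpace.pairwiseDisjoint hne) w hμ hν

lemma span_inf_wtSpace_le {G : Set W} (hG : ∀ x ∈ G, ∃ ν, x ∈ wtSpace H W ν)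
    (μ : Module.Dual ℂ H) :
    Submodule.span ℂ G ⊓ wtSpace H W μ ≤ Submodule.span ℂ (G ∩ wtSpace H W μ) :=
  fun _ ⟨hx, hxμ⟩ => mem_of_mem_iSup_of_iSupIndep iSupIndep_wtSpace
    (fun _ => Submodule.span_le.2 Set.inter_subset_right)
    (span_le_iSup_span_inter_wtSpace hG hx) hxμ

lemma map_span_inf_wtSpace_le {G : Set W} (hG : ∀ x ∈ G, ∃ ν, x ∈ wtSpace H W ν)
    (φ : W →ₗ⁅ℂ,g⁆ W') (μ : Module.Dual ℂ H) :
    (Submodule.span ℂ G).map (φ : W →ₗ[ℂ] W') ⊓ wtSpace H W' μ ≤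
      (Submodule.span ℂ (G ∩ wtSpace H W μ)).map (φ : W →ₗ[ℂ] W') := by
  refine fun _ ⟨hx, hxμ⟩ => mem_of_mem_iSup_of_iSupIndep
    (q := fun ν => (Submodule.span ℂ (G ∩ wtSpace H W ν)).map (φ : W →ₗ[ℂ] W'))
    iSupIndep_wtSpace (fun ν => Submodule.map_le_iff_le_comap.2 (Submodule.span_le.2
      fun w hw => mem_wtSpace_map φ hw.2)) ?_ hxμ
  rw [← Submodule.map_iSup]
  exact Submodule.map_mono (span_le_iSup_span_inter_wtSpace hG) hx

end WeightSpaces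

section Prod

variable {P Q : Type} [AddCommGroup P] [Module ℂ P] [LieRingModule g P] [LieModule ℂ g P]
  [AddCommGroup Q] [Module ℂ Q] [LieRingModule g Q] [LieModule ℂ g Q]

instance instLieRingModuleProd : LieRingModule g (P × Q) where
  bracket x m := (⁅x, m.1⁆, ⁅x, m.2⁆)
  add_lie _ _ _ := Prod.ext (add_lie _ _ _) (add_lie _ _ _)
  lie_add _ _ _ := Prod.ext (lie_add _ _ _) (lie_add _ _ _)
  leibniz_lie _ _ _ := Prod.ext (leibniz_lie _ _ _) (leibniz_lie _ _ _)

instance instLieModuleProd : LieModule ℂ g (P × Q) where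
  smul_lie _ _ _ := Prod.ext (smul_lie _ _ _) (smul_lie _ _ _)
  lie_smul _ _ _ := Prod.ext (lie_smul _ _ _) (lie_smul _ _ _)

def prodFst : P × Q →ₗ⁅ℂ,g⁆ P where
  toLinearMap := LinearMap.fst ℂ P Q
  map_lie' := rfl

def prodSnd : P × Q →ₗ⁅ℂ,g⁆ Q where
  toLinearMap := LinearMap.snd ℂ P Q
  map_lie' := rfl

def prodInr : Q →ₗ⁅ℂ,g⁆ P × Q where
  toLinearMap := LinearMap.inr ℂ P Q
  map_lie' := Prod.ext (lie_zero _).symm rfl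

lemma mk_mem_wtSpace_prod {H : LieSubalgebra ℂ g} {μ : Module.Dual ℂ H} {a : P} {b : Q}
    (ha : a ∈ wtSpace H P μ) (hb : b ∈ wtSpace H Q μ) : (a, b) ∈ wtSpace H (P × Q) μ :=
  fun h => Prod.ext (ha h) (hb h)

end Prod

instance (D : Data 𝓘 g) : IsLieAbelian D.H where
  trivial h h' := Subtype.ext (D.cartan_abelian h h')

section Monomials

variable (D : Data 𝓘 g) {W : Type} [AddCommGroup W] [LieRingModule g W]

/-- `fMon D [i₁, …, iₖ] w = f_{i₁} ⋯ f_{iₖ} · w`. -/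
def fMon (l : List 𝓘) (w : W) : W := l.foldr (fun i x => ⁅D.f i, x⁆) w

def fMonSet (X : Set W) : Set W := Set.image2 (fMon D) Set.univ X

@[simp] lemma fMon_nil (w : W) : fMon D [] w = w := rfl

@[simp] lemma fMon_cons (i : 𝓘) (l : List 𝓘) (w : W) :
    fMon D (i :: l) w = ⁅D.f i, fMon D l w⁆ := rfl

lemma fMon_append (l l' : List 𝓘) (w : W) : fMon D (l ++ l') w = fMon D l (fMon D l' w) :=
  List.foldr_append ..

lemma fMon_zero (l : List 𝓘) : fMon D l (0 : W) = 0 := by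
  induction l with
  | nil => rfl
  | cons i l ih => rw [fMon_cons, ih, lie_zero]

lemma fMon_perm {l l' : List 𝓘} (hl : l.Perm l')
    (hcomm : ∀ i ∈ l, ∀ j ∈ l, ⁅D.f i, D.f j⁆ = 0) (w : W) : fMon D l w = fMon D l' w := by
  induction hl with
  | nil => rfl
  | cons i _ ih =>
    rw [fMon_cons, fMon_cons, ih fun a ha b hb => hcomm a (by simp [ha]) b (by simp [hb])]
  | swap i j l =>
    rw [fMon_cons, fMon_cons, fMon_cons, fMon_cons, leibniz_lie,
      hcomm j (by simp) i (by simp), zero_lie, zero_add]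
  | trans h₁ _ ih₁ ih₂ =>
    rw [ih₁ hcomm, ih₂ fun a ha b hb => hcomm a (h₁.mem_iff.2 ha) b (h₁.mem_iff.2 hb)]

lemma lie_e_fMon_of_notMem {j : 𝓘} {l : List 𝓘} (hj : j ∉ l) (w : W) :
    ⁅D.e j, fMon D l w⁆ = fMon D l ⁅D.e j, w⁆ := by
  induction l with
  | nil => rfl
  | cons i l ih =>
    rw [List.mem_cons, not_or] at hj
    rw [fMon_cons, fMon_cons, leibniz_lie, D.lie_e_f_ne j i hj.1, zero_lie, zero_add, ih hj.2]

def rootSum (m : Multiset 𝓘) : Module.Dual ℂ D.H := (m.map D.α).sum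

@[simp] lemma rootSum_cons (i : 𝓘) (m : Multiset 𝓘) :
    rootSum D (i ::ₘ m) = D.α i + rootSum D m := by
  simp [rootSum]

lemma rootSum_add (m m' : Multiset 𝓘) : rootSum D (m + m') = rootSum D m + rootSum D m' := by
  simp [rootSum]

lemma rootSum_injective : Function.Injective (rootSum D) := by
  have hsum : ∀ m, rootSum D m = Finsupp.linearCombination ℕ D.α (Multiset.toFinsupp m) := by
    intro m
    conv_lhs => rw [rootSum, ← Multiset.toFinsupp_toMultiset m]
    rw [Finsupp.toMultiset_map, Finsupp.sum_toMultiset, Finsupp.linearCombination_apply,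
      Finsupp.sum_mapDomain_index (fun b => zero_smul ℕ b) (fun b m₁ m₂ => add_smul m₁ m₂ b)]
  intro m m' h
  rw [hsum, hsum] at h
  exact Multiset.toFinsupp.injective (D.indepSimple.restrict_scalars' ℕ h)

variable [Module ℂ W] [LieModule ℂ g W]

/-- The zero vector counts as singular. -/
def IsSingular (κ : Module.Dual ℂ D.H) (w : W) : Prop :=
  w ∈ wtSpace D.H W κ ∧ ∀ j, ⁅D.e j, w⁆ = 0

lemma lie_f_mem_wtSpace {κ : Module.Dual ℂ D.H} {w : W} (hw : w ∈ wtSpace D.H W κ) (i : 𝓘) :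
    ⁅D.f i, w⁆ ∈ wtSpace D.H W (κ - D.α i) := fun h => by
  rw [leibniz_lie, D.lie_h_f h i, hw h, neg_smul, neg_lie, smul_lie, lie_smul,
    LinearMap.sub_apply, sub_smul]
  abel

lemma fMon_mem_wtSpace {κ : Module.Dual ℂ D.H} {w : W} (hw : w ∈ wtSpace D.H W κ)
    (l : List 𝓘) : fMon D l w ∈ wtSpace D.H W (κ - rootSum D l) := by
  induction l with
  | nil => simpa [rootSum] using hw
  | cons i l ih =>
    rw [fMon_cons, ← Multiset.cons_coe, rootSum_cons, add_comm, ← sub_sub]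
    exact lie_f_mem_wtSpace D ih i

lemma exists_mem_wtSpace_of_mem_fMonSet {X : Set W} (hX : ∀ x ∈ X, ∃ κ, IsSingular D κ x) :
    ∀ z ∈ fMonSet D X, ∃ ν, z ∈ wtSpace D.H W ν := by
  rintro _ ⟨l, -, x, hx, rfl⟩
  obtain ⟨κ, hκ, -⟩ := hX x hx
  exact ⟨_, fMon_mem_wtSpace D hκ l⟩

lemma lie_mem_span_of_forall {G : Set W} {y : g} (hG : ∀ z ∈ G, ⁅y, z⁆ ∈ Submodule.span ℂ G)
    {w : W} (hw : w ∈ Submodule.span ℂ G) : ⁅y, w⁆ ∈ Submodule.span ℂ G :=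
  (Submodule.span_le (p := (Submodule.span ℂ G).comap (LieModule.toEnd ℂ g W y))).2 hG hw

lemma lie_mem_span_fMonSet {X : Set W} (hX : ∀ x ∈ X, ∃ κ, IsSingular D κ x) (y : g) {w : W}
    (hw : w ∈ Submodule.span ℂ (fMonSet D X)) : ⁅y, w⁆ ∈ Submodule.span ℂ (fMonSet D X) := by
  set P := Submodule.span ℂ (fMonSet D X)
  have hmon : ∀ (l : List 𝓘) {x}, x ∈ X → fMon D l x ∈ P := fun l x hx =>
    Submodule.subset_span ⟨l, trivial, x, hx, rfl⟩
  have hH : ∀ y ∈ D.H, ∀ w ∈ P, ⁅y, w⁆ ∈ P := fun y hy w hw => by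
    refine lie_mem_span_of_forall (fun z hz => ?_) hw
    obtain ⟨ν, hν⟩ := exists_mem_wtSpace_of_mem_fMonSet D hX z hz
    rw [show y = ((⟨y, hy⟩ : D.H) : g) from rfl, hν ⟨y, hy⟩]
    exact P.smul_mem _ (Submodule.subset_span hz)
  have hf : ∀ i, ∀ w ∈ P, ⁅D.f i, w⁆ ∈ P := fun i w hw => by
    refine lie_mem_span_of_forall ?_ hw
    rintro _ ⟨l, -, x, hx, rfl⟩
    exact hmon (i :: l) hx
  have he : ∀ i, ∀ w ∈ P, ⁅D.e i, w⁆ ∈ P := fun i w hw => by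
    refine lie_mem_span_of_forall ?_ hw
    rintro _ ⟨l, -, x, hx, rfl⟩
    induction l with
    | nil => simp [(hX x hx).choose_spec.2 i]
    | cons j l ih =>
      rw [fMon_cons, leibniz_lie]
      refine P.add_mem ?_ (hf j _ ih)
      by_cases hij : i = j
      · rw [← hij, D.lie_e_f_same]
        exact hH _ (D.coroot i).2 _ (hmon l hx)
      · rw [D.lie_e_f_ne i j hij, zero_lie]
        exact P.zero_mem
  have hy : y ∈ LieSubalgebra.lieSpan ℂ g ((D.H : Set g) ∪ Set.range D.e ∪ Set.range D.f) :=
    D.generates ▸ LieSubalgebra.mem_top y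
  induction hy using LieSubalgebra.lieSpan_induction generalizing w with
  | mem y hy =>
    rcases hy with (hy | ⟨i, rfl⟩) | ⟨i, rfl⟩
    exacts [hH y hy w hw, he i w hw, hf i w hw]
  | zero => simp
  | add y z _ _ hy hz => rw [add_lie]; exact P.add_mem (hy hw) (hz hw)
  | smul c y _ hy => rw [smul_lie]; exact P.smul_mem c (hy hw)
  | lie y z _ _ hy hz => rw [lie_lie]; exact P.sub_mem (hy (hz hw)) (hz (hy hw))

lemma lieSpan_eq_span_fMonSet {X : Set W} (hX : ∀ x ∈ X, ∃ κ, IsSingular D κ x) :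
    (lieSpan ℂ g X : Submodule ℂ W) = Submodule.span ℂ (fMonSet D X) := by
  refine le_antisymm ?_ (Submodule.span_le.2 ?_)
  · let P : LieSubmodule ℂ g W :=
      { Submodule.span ℂ (fMonSet D X) with lie_mem := lie_mem_span_fMonSet D hX _ }
    exact lieSpan_le (N := P).2 fun x hx => Submodule.subset_span ⟨[], trivial, x, hx, rfl⟩
  · rintro _ ⟨l, -, x, hx, rfl⟩
    induction l with
    | nil => exact subset_lieSpan hx
    | cons i l ih => exact LieSubmodule.lie_mem _ ih

end Monomials

section WeightsOfLieSpan

variable (D : Data 𝓘 g) {W W' : Type} [AddCommGroup W] [Module ℂ W] [LieRingModule g W]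
  [LieModule ℂ g W] [AddCommGroup W'] [Module ℂ W'] [LieRingModule g W'] [LieModule ℂ g W']

lemma lieSpan_inf_wtSpace_le {X : Set W} (hX : ∀ x ∈ X, ∃ κ, IsSingular D κ x)
    (μ : Module.Dual ℂ D.H) :
    (lieSpan ℂ g X : Submodule ℂ W) ⊓ wtSpace D.H W μ ≤
      Submodule.span ℂ (fMonSet D X ∩ wtSpace D.H W μ) := by
  rw [lieSpan_eq_span_fMonSet D hX]
  exact span_inf_wtSpace_le (exists_mem_wtSpace_of_mem_fMonSet D hX) μ

lemma map_lieSpan_inf_wtSpace_le {X : Set W} (hX : ∀ x ∈ X, ∃ κ, IsSingular D κ x)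
    (φ : W →ₗ⁅ℂ,g⁆ W') (μ : Module.Dual ℂ D.H) :
    (lieSpan ℂ g X : Submodule ℂ W).map (φ : W →ₗ[ℂ] W') ⊓ wtSpace D.H W' μ ≤
      ((lieSpan ℂ g X : Submodule ℂ W) ⊓ wtSpace D.H W μ).map (φ : W →ₗ[ℂ] W') := by
  rw [lieSpan_eq_span_fMonSet D hX]
  exact (map_span_inf_wtSpace_le (exists_mem_wtSpace_of_mem_fMonSet D hX) φ μ).trans
    (Submodule.map_mono (le_inf (Submodule.span_mono Set.inter_subset_left)
      (Submodule.span_le.2 Set.inter_subset_right)))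

lemma lieSpan_image_inf_wtSpace_eq_bot {ι : Type} (u : ι → W) (κ : ι → Module.Dual ℂ D.H)
    (hu : ∀ t, IsSingular D (κ t) (u t)) {S : Set ι} {μ : Module.Dual ℂ D.H}
    (hμ : ∀ t ∈ S, ∀ m, κ t - rootSum D m ≠ μ) :
    (lieSpan ℂ g (u '' S) : Submodule ℂ W) ⊓ wtSpace D.H W μ = ⊥ := by
  refine le_bot_iff.1 <| (lieSpan_inf_wtSpace_le D
    (by rintro _ ⟨t, -, rfl⟩; exact ⟨_, hu t⟩) μ).trans (Submodule.span_le.2 ?_)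
  rintro _ ⟨⟨l, -, _, ⟨t, ht, rfl⟩, rfl⟩, hlμ⟩
  exact eq_zero_of_mem_wtSpace_of_ne (fMon_mem_wtSpace D (hu t).1 l) hlμ (hμ t ht l)

lemma finite_setOf_rootSum_eq (ν : Module.Dual ℂ D.H) :
    {l : List 𝓘 | rootSum D l = ν}.Finite := by
  rcases Set.eq_empty_or_nonempty {l : List 𝓘 | rootSum D l = ν} with h | ⟨l₀, hl₀⟩
  · simp [h]
  · exact l₀.permutations.finite_toSet.subset fun l hl => List.mem_permutations.2
      (Multiset.coe_eq_coe.1 (rootSum_injective D (hl.trans hl₀.symm)))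

variable {κ : Module.Dual ℂ D.H} {u : W}

lemma lieSpan_singleton_inf_wtSpace_le (hu : IsSingular D κ u) (μ : Module.Dual ℂ D.H) :
    (lieSpan ℂ g {u} : Submodule ℂ W) ⊓ wtSpace D.H W μ ≤
      Submodule.span ℂ ((fMon D · u) '' {l | κ - rootSum D l = μ}) := by
  refine (lieSpan_inf_wtSpace_le D (by simpa using ⟨κ, hu⟩) μ).trans (Submodule.span_le.2 ?_)
  rintro _ ⟨⟨l, -, x, rfl, rfl⟩, hlμ⟩
  by_cases h : κ - rootSum D l = μ
  · exact Submodule.subset_span ⟨l, h, rfl⟩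
  · rw [eq_zero_of_mem_wtSpace_of_ne (fMon_mem_wtSpace D hu.1 l) hlμ h]
    exact Submodule.zero_mem _

lemma finiteDimensional_lieSpan_singleton_inf_wtSpace (hu : IsSingular D κ u)
    (μ : Module.Dual ℂ D.H) :
    FiniteDimensional ℂ ↥((lieSpan ℂ g {u} : Submodule ℂ W) ⊓ wtSpace D.H W μ) :=
  have : FiniteDimensional ℂ (Submodule.span ℂ ((fMon D · u) '' {l | κ - rootSum D l = μ})) :=
    FiniteDimensional.span_of_finite ℂ <| ((finite_setOf_rootSum_eq D (κ - μ)).subset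
      fun l (hl : κ - rootSum D l = μ) =>
        show rootSum D l = κ - μ by rw [← hl, sub_sub_cancel]).image _
  Submodule.finiteDimensional_of_le (lieSpan_singleton_inf_wtSpace_le D hu μ)

lemma lieSpan_singleton_inf_wtSpace_sub_rootSum_le (hu : IsSingular D κ u) {l₀ : List 𝓘}
    (hcomm : ∀ i ∈ l₀, ∀ j ∈ l₀, ⁅D.f i, D.f j⁆ = 0) :
    (lieSpan ℂ g {u} : Submodule ℂ W) ⊓ wtSpace D.H W (κ - rootSum D l₀) ≤
      ℂ ∙ fMon D l₀ u := by
  refine (lieSpan_singleton_inf_wtSpace_le D hu _).trans (Submodule.span_le.2 ?_)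
  rintro _ ⟨l, hl, rfl⟩
  have hperm : l.Perm l₀ := Multiset.coe_eq_coe.1 (rootSum_injective D (sub_right_injective hl))
  change fMon D l u ∈ ℂ ∙ fMon D l₀ u
  rw [fMon_perm D hperm fun i hi j hj => hcomm i (hperm.mem_iff.1 hi) j (hperm.mem_iff.1 hj)]
  exact Submodule.mem_span_singleton_self _

lemma lieSpan_singleton_inf_wtSpace_self_le (hu : IsSingular D κ u) :
    (lieSpan ℂ g {u} : Submodule ℂ W) ⊓ wtSpace D.H W κ ≤ ℂ ∙ u := by
  simpa [rootSum] using lieSpan_singleton_inf_wtSpace_sub_rootSum_le D hu (l₀ := []) (by simp)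

end WeightsOfLieSpan

section SingularVectors

variable (D : Data 𝓘 g) {W W' : Type} [AddCommGroup W] [Module ℂ W] [LieRingModule g W]
  [LieModule ℂ g W] [AddCommGroup W'] [Module ℂ W'] [LieRingModule g W'] [LieModule ℂ g W']

lemma IsSingular.map {κ : Module.Dual ℂ D.H} {w : W} (hw : IsSingular D κ w)
    (φ : W →ₗ⁅ℂ,g⁆ W') : IsSingular D κ (φ w) :=
  ⟨mem_wtSpace_map φ hw.1, fun j => by rw [← φ.map_lie, hw.2 j, map_zero]⟩

lemma IsSingular.prod {κ : Module.Dual ℂ D.H} {w : W} {w' : W'} (hw : IsSingular D κ w)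
    (hw' : IsSingular D κ w') : IsSingular D κ (w, w') :=
  ⟨mk_mem_wtSpace_prod hw.1 hw'.1, fun j => Prod.ext (hw.2 j) (hw'.2 j)⟩

lemma lie_f_f_eq_zero_of_indepSet {S : Set 𝓘} (hS : IndepSet D S) {i j : 𝓘} (hi : i ∈ S)
    (hj : j ∈ S) : ⁅D.f i, D.f j⁆ = 0 := by
  by_cases hij : i = j
  · rw [hij, lie_self]
  · have hA : D.A i j = 0 :=
      (D.A_zero_iff i j).2 (by exact_mod_cast (D.pairing_eq i j).symm.trans (hS i hi j hj hij))
    simpa [hA] using D.serre_f i j hij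

lemma lie_e_fMon_replicate {κ : Module.Dual ℂ D.H} {w : W} (hw : w ∈ wtSpace D.H W κ)
    {a : 𝓘} (he : ⁅D.e a, w⁆ = 0) (n : ℕ) :
    ⁅D.e a, fMon D (List.replicate (n + 1) a) w⁆ =
      ((n + 1 : ℂ) * (κ (D.coroot a) - n)) • fMon D (List.replicate n a) w := by
  induction n with
  | zero => simp [leibniz_lie, he, D.lie_e_f_same, hw (D.coroot a)]
  | succ n ih =>
    rw [List.replicate_succ, fMon_cons, leibniz_lie, D.lie_e_f_same, ih, lie_smul,
      fMon_mem_wtSpace D hw _ (D.coroot a), ← fMon_cons, ← List.replicate_succ, ← add_smul]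
    congr 1
    simp only [rootSum, Multiset.map_coe, List.map_replicate, Multiset.sum_coe,
      List.sum_replicate, LinearMap.sub_apply, LinearMap.smul_apply, D.pairing_eq, D.A_diag,
      Int.cast_ofNat, nsmul_eq_mul, Nat.cast_add, Nat.cast_one]
    ring

lemma IsSingular.fMon_replicate {κ : Module.Dual ℂ D.H} {w : W} (hw : IsSingular D κ w)
    {a : 𝓘} {n : ℕ} (hn : κ (D.coroot a) = n) :
    IsSingular D (κ - rootSum D (List.replicate (n + 1) a))
      (fMon D (List.replicate (n + 1) a) w) := by
  refine ⟨fMon_mem_wtSpace D hw.1 _, fun j => ?_⟩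
  by_cases hj : j = a
  · rw [hj, lie_e_fMon_replicate D hw.1 (hw.2 a) n, hn, sub_self, mul_zero, zero_smul]
  · rw [lie_e_fMon_of_notMem D (by simp [hj]), hw.2 j, fMon_zero]

lemma rootSum_apply_eq_zero {m : Multiset 𝓘} {h : D.H} (hm : ∀ i ∈ m, D.α i h = 0) :
    rootSum D m h = 0 := by
  induction m using Multiset.induction_on with
  | empty => rfl
  | cons i m ih =>
    rw [rootSum_cons, LinearMap.add_apply, hm i (Multiset.mem_cons_self i m), zero_add]
    exact ih fun j hj => hm j (Multiset.mem_cons_of_mem hj)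

/-- The word of `∏_{i ∈ hs} f_i ^ (n i + 1)`. -/
def singularWord (n : 𝓘 → ℕ) (hs : List 𝓘) : List 𝓘 :=
  hs.flatMap fun i => List.replicate (n i + 1) i

lemma mem_singularWord {n : 𝓘 → ℕ} {hs : List 𝓘} {i : 𝓘} :
    i ∈ singularWord n hs ↔ i ∈ hs := by
  simp [singularWord]

lemma singularWord_toList_injective (n : 𝓘 → ℕ) :
    Function.Injective fun H : Finset 𝓘 => (singularWord n H.toList : Multiset 𝓘) :=
  fun H H' h => Finset.ext fun i => by simpa [mem_singularWord] using congrArg (i ∈ ·) h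

lemma rootSum_singularWord_toList (n : 𝓘 → ℕ) (H : Finset 𝓘) :
    rootSum D (singularWord n H.toList) = ∑ i ∈ H, ((n i : ℂ) + 1) • D.α i := by
  rw [← Finset.sum_map_toList]
  induction H.toList with
  | nil => rfl
  | cons a hs ih =>
    rw [List.map_cons, List.sum_cons, ← ih, singularWord, List.flatMap_cons, ← Multiset.coe_add,
      rootSum_add]
    simp [rootSum, singularWord, ← Nat.cast_smul_eq_nsmul ℂ]

lemma isSingular_fMon_singularWord {lam : Module.Dual ℂ D.H} {v : W} (hv : IsSingular D lam v)
    {n : 𝓘 → ℕ} {hs : List 𝓘} (hnd : hs.Nodup)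
    (hind : ∀ i ∈ hs, ∀ j ∈ hs, i ≠ j → D.α i (D.coroot j) = 0)
    (hn : ∀ i ∈ hs, lam (D.coroot i) = n i) :
    IsSingular D (lam - rootSum D (singularWord n hs)) (fMon D (singularWord n hs) v) := by
  induction hs with
  | nil => simpa [singularWord, rootSum] using hv
  | cons a hs ih =>
    rw [List.nodup_cons] at hnd
    have hrest := ih hnd.2 (fun i hi j hj => hind i (by simp [hi]) j (by simp [hj]))
      (fun i hi => hn i (by simp [hi]))
    have ha : (lam - rootSum D (singularWord n hs)) (D.coroot a) = n a := by
      rw [LinearMap.sub_apply, hn a (by simp), sub_eq_self]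
      refine rootSum_apply_eq_zero D fun i hi => hind i
        (List.mem_cons_of_mem a (mem_singularWord.1 hi)) a (by simp) ?_
      rintro rfl
      exact hnd.1 (mem_singularWord.1 hi)
    have := hrest.fMon_replicate D ha
    rw [sub_sub, add_comm, ← rootSum_add, Multiset.coe_add, ← fMon_append] at this
    exact this

end SingularVectors

section GraphArgument

variable (D : Data 𝓘 g) {Q L : Type} [AddCommGroup Q] [Module ℂ Q] [LieRingModule g Q]
  [LieModule ℂ g Q] [AddCommGroup L] [Module ℂ L] [LieRingModule g L] [LieModule ℂ g L]
  {κ : Module.Dual ℂ D.H} {q : Q} {l : L}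

lemma eq_zero_of_mem_lieSpan_of_fst_eq_zero (hq : IsSingular D κ q) (hq0 : q ≠ 0)
    (hl : IsSingular D κ l) (hl0 : l ≠ 0) (hL : ∀ N : LieSubmodule ℂ g L, N = ⊥ ∨ N = ⊤)
    {x : Q × L} (hx : x ∈ lieSpan ℂ g {(q, l)}) (hx1 : x.1 = 0) : x = 0 := by
  rcases hL ((lieSpan ℂ g {(q, l)}).comap prodInr) with hK | hK
  · have hx2 : x.2 ∈ (lieSpan ℂ g {(q, l)}).comap prodInr := by
      rw [LieSubmodule.mem_comap]
      convert hx
      exact Prod.ext hx1.symm rfl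
    rw [hK, LieSubmodule.mem_bot] at hx2
    exact Prod.ext hx1 hx2
  · -- otherwise `(0, l)` would be a multiple of `(q, l)`
    have h0l : ((0 : Q), l) ∈
        (lieSpan ℂ g {(q, l)} : Submodule ℂ (Q × L)) ⊓ wtSpace D.H (Q × L) κ :=
      ⟨(hK ▸ LieSubmodule.mem_top l : l ∈ (lieSpan ℂ g {(q, l)}).comap prodInr),
        mk_mem_wtSpace_prod (Submodule.zero_mem _) hl.1⟩
    obtain ⟨c, hc⟩ := Submodule.mem_span_singleton.1
      (lieSpan_singleton_inf_wtSpace_self_le D (hq.prod D hl) h0l)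
    rcases smul_eq_zero.1 (congrArg Prod.fst hc) with rfl | h
    · exact absurd (by simpa using (congrArg Prod.snd hc).symm) hl0
    · exact absurd h hq0

theorem finrank_wtSpace_le_of_isSingular (hq : IsSingular D κ q) (hq0 : q ≠ 0)
    (hl : IsSingular D κ l) (hl0 : l ≠ 0) (hL : ∀ N : LieSubmodule ℂ g L, N = ⊥ ∨ N = ⊤)
    (μ : Module.Dual ℂ D.H) :
    finrank ℂ (wtSpace D.H L μ) ≤
      finrank ℂ ↥((lieSpan ℂ g {q} : Submodule ℂ Q) ⊓ wtSpace D.H Q μ) := by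
  let fst : Q × L →ₗ[ℂ] Q := (prodFst : Q × L →ₗ⁅ℂ,g⁆ Q)
  let snd : Q × L →ₗ[ℂ] L := (prodSnd : Q × L →ₗ⁅ℂ,g⁆ L)
  set T := (lieSpan ℂ g {(q, l)} : Submodule ℂ (Q × L)) ⊓ wtSpace D.H (Q × L) μ
  have := finiteDimensional_lieSpan_singleton_inf_wtSpace D (hq.prod D hl) μ
  have := finiteDimensional_lieSpan_singleton_inf_wtSpace D hq μ
  have hsnd_top : (lieSpan ℂ g {(q, l)}).map (prodSnd : Q × L →ₗ⁅ℂ,g⁆ L) = ⊤ :=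
    (hL _).resolve_left fun h => hl0 <| by
      have : l ∈ (lieSpan ℂ g {(q, l)}).map (prodSnd : Q × L →ₗ⁅ℂ,g⁆ L) :=
        LieSubmodule.mem_map_of_mem (N := lieSpan ℂ g {(q, l)}) (subset_lieSpan rfl)
      rwa [h, LieSubmodule.mem_bot] at this
  have hsnd : wtSpace D.H L μ ≤ T.map snd := fun y hy =>
    map_lieSpan_inf_wtSpace_le D (X := {(q, l)}) (by rintro _ rfl; exact ⟨κ, hq.prod D hl⟩)
      prodSnd μ ⟨by rw [← LieSubmodule.toSubmodule_map, hsnd_top]; trivial, hy⟩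
  have hfst : T.map fst ≤ (lieSpan ℂ g {q} : Submodule ℂ Q) ⊓ wtSpace D.H Q μ :=
    Submodule.map_le_iff_le_comap.2 fun x hx =>
      ⟨(lieSpan_le (N := (lieSpan ℂ g {q}).comap prodFst)).2
        (Set.singleton_subset_iff.2 (subset_lieSpan rfl)) hx.1, mem_wtSpace_map prodFst hx.2⟩
  have hker : LinearMap.ker fst ⊓ T = ⊥ :=
    le_bot_iff.1 fun x hx => eq_zero_of_mem_lieSpan_of_fst_eq_zero D hq hq0 hl hl0 hL hx.2.1 hx.1
  calc finrank ℂ (wtSpace D.H L μ) ≤ finrank ℂ (T.map snd) := Submodule.finrank_mono hsnd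
    _ ≤ finrank ℂ T := Submodule.finrank_map_le _ _
    _ = finrank ℂ (T.map fst) := by
        rw [← finrank_ker_inf_add_finrank_map fst T, hker, finrank_bot, zero_add]
    _ ≤ _ := Submodule.finrank_mono hfst

end GraphArgument

section Filtration

variable (D : Data 𝓘 g) {V : Type} [AddCommGroup V] [Module ℂ V] [LieRingModule g V]
  [LieModule ℂ g V] {ι : Type}

lemma notMem_lieSpan_image_erase {lam : Module.Dual ℂ D.H} {m : ι → Multiset 𝓘} {u : ι → V}
    (hu : ∀ t, IsSingular D (lam - rootSum D (m t)) (u t)) {S : Finset ι} (hm : Set.InjOn m S)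
    {t₀ : ι} (ht₀ : t₀ ∈ S) (hmin : ∀ t ∈ S, Multiset.card (m t₀) ≤ Multiset.card (m t))
    (hu₀ : u t₀ ≠ 0) : u t₀ ∉ lieSpan ℂ g (u '' ↑(S.erase t₀)) := by
  intro hmem
  have hbot := lieSpan_image_inf_wtSpace_eq_bot D u _ hu (S := ↑(S.erase t₀))
    (μ := lam - rootSum D (m t₀)) fun t ht m' heq => by
      rw [sub_sub, ← rootSum_add, sub_right_inj] at heq
      have htS := Finset.mem_of_mem_erase ht
      have hle : m t ≤ m t₀ := rootSum_injective D heq ▸ Multiset.le_add_right _ _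
      exact Finset.ne_of_mem_erase ht
        (hm htS ht₀ (Multiset.eq_of_le_of_card_le hle (hmin t htS)))
  exact hu₀ ((Submodule.mem_bot ℂ).1 (hbot ▸ ⟨hmem, (hu t₀).1⟩))

theorem sum_finrank_wtSpace_le (L : ι → Type) [∀ t, AddCommGroup (L t)] [∀ t, Module ℂ (L t)]
    [∀ t, LieRingModule g (L t)] [∀ t, LieModule ℂ g (L t)] (lvec : ∀ t, L t)
    (lam : Module.Dual ℂ D.H) (m : ι → Multiset 𝓘) (u : ι → V)
    (hu : ∀ t, IsSingular D (lam - rootSum D (m t)) (u t)) (hu0 : ∀ t, u t ≠ 0)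
    (hl : ∀ t, IsSingular D (lam - rootSum D (m t)) (lvec t)) (hl0 : ∀ t, lvec t ≠ 0)
    (hL : ∀ t, ∀ N : LieSubmodule ℂ g (L t), N = ⊥ ∨ N = ⊤)
    (μ : Module.Dual ℂ D.H) [FiniteDimensional ℂ (wtSpace D.H V μ)]
    (S : Finset ι) (hm : Set.InjOn m S) :
    ∑ t ∈ S, finrank ℂ (wtSpace D.H (L t) μ) ≤
      finrank ℂ ↥((lieSpan ℂ g (u '' S) : Submodule ℂ V) ⊓ wtSpace D.H V μ) := by
  induction S using Finset.strongInduction with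
  | H S ih =>
  rcases S.eq_empty_or_nonempty with rfl | hS
  · simp
  obtain ⟨t₀, ht₀, hmin⟩ := S.exists_min_image (fun t => Multiset.card (m t)) hS
  set N := lieSpan ℂ g (u '' ↑(S.erase t₀))
  set P := (lieSpan ℂ g (u '' ↑S) : Submodule ℂ V) ⊓ wtSpace D.H V μ
  have : FiniteDimensional ℂ P := Submodule.finiteDimensional_of_le inf_le_right
  let π := LieSubmodule.Quotient.mk' N
  have hπu : π (u t₀) ≠ 0 := fun h => notMem_lieSpan_image_erase D hu hm ht₀ hmin (hu0 t₀)
    ((LieSubmodule.Quotient.mk_eq_zero N).1 h)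
  have hker : LinearMap.ker (π : V →ₗ[ℂ] V ⧸ N) ⊓ P = (N : Submodule ℂ V) ⊓ wtSpace D.H V μ := by
    have hNS : (N : Submodule ℂ V) ≤ lieSpan ℂ g (u '' ↑S) :=
      lieSpan_mono (Set.image_mono (Finset.coe_subset.2 (Finset.erase_subset t₀ S)))
    rw [← LieModuleHom.ker_toSubmodule, LieSubmodule.Quotient.mk'_ker, ← inf_assoc,
      inf_eq_left.2 hNS]
  have hπ : (lieSpan ℂ g {π (u t₀)} : Submodule ℂ (V ⧸ N)) ⊓ wtSpace D.H (V ⧸ N) μ ≤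
      P.map (π : V →ₗ[ℂ] V ⧸ N) := by
    refine le_trans (inf_le_inf_right _ ?_) (map_lieSpan_inf_wtSpace_le D
      (by rintro _ ⟨t, -, rfl⟩; exact ⟨_, hu t⟩) π μ)
    rw [← LieSubmodule.toSubmodule_map, LieSubmodule.toSubmodule_le_toSubmodule, lieSpan_le,
      Set.singleton_subset_iff]
    exact LieSubmodule.mem_map_of_mem (subset_lieSpan ⟨t₀, ht₀, rfl⟩)
  calc ∑ t ∈ S, finrank ℂ (wtSpace D.H (L t) μ)
      = ∑ t ∈ S.erase t₀, finrank ℂ (wtSpace D.H (L t) μ) + finrank ℂ (wtSpace D.H (L t₀) μ) :=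
        (Finset.sum_erase_add _ _ ht₀).symm
    _ ≤ finrank ℂ ↥((N : Submodule ℂ V) ⊓ wtSpace D.H V μ) +
          finrank ℂ (P.map (π : V →ₗ[ℂ] V ⧸ N)) :=
        add_le_add (ih _ (Finset.erase_ssubset ht₀) (hm.mono (by simp)))
          ((finrank_wtSpace_le_of_isSingular D ((hu t₀).map D π) hπu (hl t₀) (hl0 t₀) (hL t₀)
            μ).trans (Submodule.finrank_mono hπ))
    _ = finrank ℂ P := by rw [← hker, finrank_ker_inf_add_finrank_map]

end Filtration

theorem multiplicity_lower_bound_general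
    {𝓘 : Type} {g : Type} [LieRing g] [LieAlgebra ℂ g]
    (D : Data 𝓘 g)
    (V : Type) [AddCommGroup V] [Module ℂ V] [LieRingModule g V] [LieModule ℂ g V]
    (lam : Module.Dual ℂ D.H) (v : V) (hV : IsHW D V lam v)
    (s : ℕ) (Hs : Fin s → Finset 𝓘) (hdist : Function.Injective Hs)
    (hind : ∀ t : Fin s, IndepSet D (↑(Hs t) : Set 𝓘))
    (hsub : ∀ t : Fin s, (↑(Hs t) : Set 𝓘) ⊆ Jlam D lam)
    (hwt : ∀ t : Fin s,
      (lam - ∑ i ∈ Hs t, (lam (D.coroot i) + 1) • D.α i) ∈ wtSet D.H V)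
    (L : Fin s → Type) [∀ t, AddCommGroup (L t)] [∀ t, Module ℂ (L t)]
    [∀ t, LieRingModule g (L t)] [∀ t, LieModule ℂ g (L t)]
    (lvec : ∀ t, L t)
    (hL : ∀ t : Fin s,
      IsHW D (L t) (lam - ∑ i ∈ Hs t, (lam (D.coroot i) + 1) • D.α i) (lvec t))
    (hLsimple : ∀ t : Fin s, ∀ N : LieSubmodule ℂ g (L t), N = ⊥ ∨ N = ⊤)
    (μ : Module.Dual ℂ D.H) :
    ∑ t : Fin s, Module.finrank ℂ ↥(wtSpace D.H (L t) μ) ≤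
      Module.finrank ℂ ↥(wtSpace D.H V μ) := by
  obtain ⟨-, hvwt, hve, hvgen⟩ := hV
  have hv : IsSingular D lam v := ⟨hvwt, hve⟩
  choose! n hn using fun i (hi : i ∈ Jlam D lam) => hi
  set word : Fin s → List 𝓘 := fun t => singularWord n (Hs t).toList
  have hword : ∀ {t i}, i ∈ word t ↔ i ∈ Hs t := mem_singularWord.trans Finset.mem_toList
  have hweight : ∀ t, lam - rootSum D (word t) =
      lam - ∑ i ∈ Hs t, (lam (D.coroot i) + 1) • D.α i := fun t => by
    rw [rootSum_singularWord_toList]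
    exact congrArg _ (Finset.sum_congr rfl fun i hi => by rw [hn i (hsub t hi)])
  have hu : ∀ t, IsSingular D (lam - rootSum D (word t)) (fMon D (word t) v) := fun t =>
    isSingular_fMon_singularWord D hv (Finset.nodup_toList _)
      (fun i hi j hj => hind t i (Finset.mem_toList.1 hi) j (Finset.mem_toList.1 hj))
      (fun i hi => hn i (hsub t (Finset.mem_toList.1 hi)))
  have hu0 : ∀ t, fMon D (word t) v ≠ 0 := fun t h0 => hwt t <| by
    rw [← hweight t, ← le_bot_iff, ← Submodule.span_zero_singleton ℂ, ← h0]
    simpa [hvgen] using lieSpan_singleton_inf_wtSpace_sub_rootSum_le D hv fun i hi j hj =>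
      lie_f_f_eq_zero_of_indepSet D (hind t) (hword.1 hi) (hword.1 hj)
  have hl : ∀ t, IsSingular D (lam - rootSum D (word t)) (lvec t) := fun t =>
    hweight t ▸ ⟨(hL t).2.1, (hL t).2.2.1⟩
  have hfd := finiteDimensional_lieSpan_singleton_inf_wtSpace D hv μ
  rw [hvgen, LieSubmodule.top_toSubmodule, top_inf_eq] at hfd
  exact (sum_finrank_wtSpace_le D L lvec lam (fun t => (word t : Multiset 𝓘)) _ hu hu0 hl
    (fun t => (hL t).1) hLsimple μ Finset.univ
    ((singularWord_toList_injective n).comp hdist).injOn).trans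
    (Submodule.finrank_mono inf_le_right)

/-- Proposition 1.13(b), inequality (1.14): let `H_1, …, H_s` be
pairwise distinct independent subsets of `J_λ` with `w_{H_t} • λ ∈ wt V` for each `t`,
where `w_{H_t} • λ = λ − Σ_{i∈H_t}(λ(α_i^∨)+1)α_i`.  Then for every `μ`,
`dim V_μ ≥ Σ_t dim L(w_{H_t} • λ)_μ`, where `L(ν)` is the simple highest weight module
with highest weight `ν`. -/
theorem multiplicity_lower_bound
    {𝓘 : Type} [Fintype 𝓘] [DecidableEq 𝓘] {g : Type} [LieRing g] [LieAlgebra ℂ g]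
    (D : Data 𝓘 g)
    (V : Type) [AddCommGroup V] [Module ℂ V] [LieRingModule g V] [LieModule ℂ g V]
    (lam : Module.Dual ℂ D.H) (v : V) (hV : IsHW D V lam v)
    (s : ℕ) (Hs : Fin s → Finset 𝓘) (hdist : Function.Injective Hs)
    (hind : ∀ t : Fin s, IndepSet D (↑(Hs t) : Set 𝓘))
    (hsub : ∀ t : Fin s, (↑(Hs t) : Set 𝓘) ⊆ Jlam D lam)
    (hwt : ∀ t : Fin s,
      (lam - ∑ i ∈ Hs t, (lam (D.coroot i) + 1) • D.α i) ∈ wtSet D.H V)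
    (L : Fin s → Type) [∀ t, AddCommGroup (L t)] [∀ t, Module ℂ (L t)]
    [∀ t, LieRingModule g (L t)] [∀ t, LieModule ℂ g (L t)]
    (lvec : ∀ t, L t)
    (hL : ∀ t : Fin s,
      IsHW D (L t) (lam - ∑ i ∈ Hs t, (lam (D.coroot i) + 1) • D.α i) (lvec t))
    (hLsimple : ∀ t : Fin s, ∀ N : LieSubmodule ℂ g (L t), N = ⊥ ∨ N = ⊤)
    (μ : Module.Dual ℂ D.H) :
    ∑ t : Fin s, Module.finrank ℂ ↥(wtSpace D.H (L t) μ) ≤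
      Module.finrank ℂ ↥(wtSpace D.H V μ) :=
  multiplicity_lower_bound_general D V lam v hV s Hs hdist hind hsub hwt L lvec hL hLsimple μ

end KM
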